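/- arXiv:2005.07829 — 7 statements merged into one kernel-verified Lean document; each statement's English description precedes it below -/
import Mathlib

section
/- If L and M are bi-embeddable linear orders and L is indecomposable, then M is also indecomposable. -/
/-- A linear order `L` is indecomposable if for every downward-closed subset `S` of `L`,
`L` order-embeds into the suborder `S` or into the suborder on the complement of `S`. -/
def Indecomposable (L : Type*) [LinearOrder L] : Prop :=
  ∀ S : Set L, (∀ x y : L, x ≤ y → y ∈ S → x ∈ S) →
    Nonempty (L ↪o ↥S) ∨ Nonempty (L ↪o ↥(Sᶜ))

def OrderEmbedding.restrictPreimage {α β : Type*} [Preorder α] [Preorder β] (f : α ↪o β)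
    (s : Set β) : ↥(f ⁻¹' s) ↪o ↥s where
  toFun x := ⟨f x, x.2⟩
  inj' _ _ h := Subtype.ext (f.injective (congrArg Subtype.val h))
  map_rel_iff' := f.le_iff_le

/-- If `L` and `M` are bi-embeddable linear orders and `L` is indecomposable,
then `M` is also indecomposable. -/
theorem indecomposable_of_biEmbeddable {L M : Type*} [LinearOrder L] [LinearOrder M]
    (hLM : Nonempty (L ↪o M)) (hML : Nonempty (M ↪o L))
    (hL : Indecomposable L) : Indecomposable M := by
  obtain ⟨f⟩ := hLM
  obtain ⟨g⟩ := hML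
  intro S hS
  have hpre : ∀ x y : L, x ≤ y → y ∈ f ⁻¹' S → x ∈ f ⁻¹' S := fun x y hxy =>
    hS (f x) (f y) (f.monotone hxy)
  obtain ⟨⟨e⟩⟩ | ⟨⟨e⟩⟩ := hL (f ⁻¹' S) hpre
  · exact .inl ⟨g.trans (e.trans (f.restrictPreimage S))⟩
  · exact .inr ⟨g.trans (e.trans (f.restrictPreimage Sᶜ))⟩
end

section
/- Let f : L → M be an order embedding between linear orders, let n ∈ ℕ, and let x, y ∈ L. If F^n_M(f(x), f(y)) holds, then F^n_L(x, y) holds. In particular, points lying in distinct n-blocks of L are mapped by f to points lying in distinct n-blocks of M. -/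
/-- The `n`-block relation `F^n_L`: `F^0_L` is equality, and `F^{n+1}_L x y` holds iff
only finitely many `F^n_L`-equivalence classes contain a point of the closed interval
between `x` and `y`. -/
def nBlockRel {L : Type*} [LinearOrder L] : ℕ → L → L → Prop
  | 0, x, y => x = y
  | n + 1, x, y =>
      {C : Set L | (∃ w : L, C = {z | nBlockRel n w z}) ∧ (C ∩ Set.uIcc x y).Nonempty}.Finite

theorem nBlockRel_equivalence {L : Type*} [LinearOrder L] (n : ℕ) :
    Equivalence (nBlockRel (L := L) n) := by
  induction n with
  | zero => exact ⟨fun _ => rfl, Eq.symm, Eq.trans⟩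
  | succ n ih =>
    have class_eq : ∀ a b : L, nBlockRel n a b →
        {z | nBlockRel n a z} = {z | nBlockRel n b z} := by
      intro a b hab
      ext u
      exact ⟨fun h => ih.trans (ih.symm hab) h, fun h => ih.trans hab h⟩
    constructor
    · intro x
      show Set.Finite _
      apply Set.Finite.subset (Set.finite_singleton {z | nBlockRel n x z})
      rintro C ⟨⟨w, rfl⟩, ⟨z, hz1, hz2⟩⟩
      rw [Set.uIcc_self, Set.mem_singleton_iff] at hz2
      subst hz2
      exact Set.mem_singleton_iff.mpr (class_eq w z hz1)
    · intro x y h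
      show Set.Finite _
      simp only [Set.uIcc_comm y x]
      exact h
    · intro x y z hxy hyz
      show Set.Finite _
      apply Set.Finite.subset (Set.Finite.union hxy hyz)
      rintro C ⟨hC, ⟨u, hu1, hu2⟩⟩
      rcases Set.uIcc_subset_uIcc_union_uIcc (a := x) (b := y) (c := z) hu2 with h1 | h1
      · exact Or.inl ⟨hC, ⟨u, hu1, h1⟩⟩
      · exact Or.inr ⟨hC, ⟨u, hu1, h1⟩⟩

/-- If `f : L ↪o M` is an order embedding and `F^n_M (f x) (f y)` holds, then
`F^n_L x y` holds.  In particular, points in distinct `n`-blocks of `L` are mapped to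
points in distinct `n`-blocks of `M`. -/
theorem nBlockRel_of_orderEmbedding {L M : Type*} [LinearOrder L] [LinearOrder M]
    (f : L ↪o M) (n : ℕ) (x y : L) (h : nBlockRel n (f x) (f y)) : nBlockRel n x y := by
  classical
  induction n generalizing x y with
  | zero => exact f.injective h
  | succ n ih =>
    have ihM := nBlockRel_equivalence (L := M) n
    have ihL := nBlockRel_equivalence (L := L) n
    show Set.Finite _
    set S : Set (Set L) :=
      {C : Set L | (∃ w : L, C = {z | nBlockRel n w z}) ∧ (C ∩ Set.uIcc x y).Nonempty} with hS
    set g : Set L → Set M := fun C =>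
      if hC : (C ∩ Set.uIcc x y).Nonempty then {z | nBlockRel n (f hC.choose) z} else ∅ with hg
    have hmap : ∀ z : L, z ∈ Set.uIcc x y → f z ∈ Set.uIcc (f x) (f y) := by
      intro z hz
      rw [Set.mem_uIcc] at hz ⊢
      rcases hz with ⟨h1, h2⟩ | ⟨h1, h2⟩
      · exact Or.inl ⟨f.le_iff_le.mpr h1, f.le_iff_le.mpr h2⟩
      · exact Or.inr ⟨f.le_iff_le.mpr h1, f.le_iff_le.mpr h2⟩
    apply Set.Finite.of_finite_image (f := g)
    · apply h.subset
      rintro _ ⟨C, ⟨⟨w, rfl⟩, hC⟩, rfl⟩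
      simp only [hg, dif_pos hC]
      refine ⟨⟨f hC.choose, rfl⟩, ⟨f hC.choose, ihM.refl _, hmap _ hC.choose_spec.2⟩⟩
    · rintro C1 ⟨⟨w1, rfl⟩, hC1⟩ C2 ⟨⟨w2, rfl⟩, hC2⟩ heq
      simp only [hg, dif_pos hC1, dif_pos hC2] at heq
      have h2 : f hC2.choose ∈ {z | nBlockRel n (f hC1.choose) z} := by
        rw [heq]; exact ihM.refl _
      have hL : nBlockRel n hC1.choose hC2.choose := ih _ _ h2
      have e1 : nBlockRel n w1 hC1.choose := hC1.choose_spec.1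
      have e2 : nBlockRel n w2 hC2.choose := hC2.choose_spec.1
      ext u
      constructor
      · intro hu
        exact ihL.trans e2 (ihL.trans (ihL.symm hL) (ihL.trans (ihL.symm e1) hu))
      · intro hu
        exact ihL.trans e1 (ihL.trans hL (ihL.trans (ihL.symm e2) hu))
end

section
/- Let (C_j)_{j∈ℕ} be a sequence of linear orders and let L = Σ_{i∈ℕ} (Σ_{j≤i} C_j) be the lexicographic sum over ℕ of the finite lexicographic sums Σ_{j≤i} C_j. Then for every x ∈ L, L order-embeds into the final segment {y ∈ L : x ≤ y}; consequently, L is bi-embeddable with each of its nonempty final segments. -/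
/-!
Block `i` of `L`, namely `Σ_{j≤i} C_j`, is an initial segment of every later block. Hence moving
block `i` to block `n + i` embeds `L` into itself, and with `n` beyond the block of `x` the image
lies above `x`. A nonempty final segment contains some `Set.Ici a`, which gives the bi-embedding.
-/

/-- The lexicographic sum `Σ_{i∈ℕ} (Σ_{j≤i} C_j)`. -/
abbrev NatSumOrder (C : ℕ → Type*) [∀ j, LinearOrder (C j)] : Type _ :=
  Lex ((i : ℕ) × Lex ((j : Fin (i + 1)) × C j.val))

def OrderEmbedding.sigmaLexMap {ι κ : Type*} {α : ι → Type*} {β : κ → Type*} [LinearOrder ι]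
    [Preorder κ] [∀ i, LinearOrder (α i)] [∀ k, Preorder (β k)]
    (f : ι ↪o κ) (g : ∀ i, α i ↪o β (f i)) : (Σₗ i, α i) ↪o Σₗ k, β k :=
  .ofStrictMono (fun x => toLex (Sigma.map f (fun i => g i) (ofLex x))) <| by
    rintro ⟨i, a⟩ ⟨j, b⟩ (⟨_, _, hij⟩ | ⟨_, _, hab⟩)
    · exact Sigma.Lex.left _ _ (f.strictMono hij)
    · exact Sigma.Lex.right _ _ ((g i).strictMono hab)

theorem IsUpperSet.nonempty_orderEmbedding {α : Type*} [Preorder α]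
    (h : ∀ x : α, Nonempty (α ↪o Set.Ici x)) {S : Set α} (hS : IsUpperSet S)
    (hne : S.Nonempty) : Nonempty (α ↪o S) := by
  obtain ⟨a, ha⟩ := hne
  obtain ⟨f⟩ := h a
  exact ⟨f.trans ⟨⟨Set.inclusion (hS.Ici_subset ha), Set.inclusion_injective _⟩, Iff.rfl⟩⟩

namespace NatSumOrder

variable (C : ℕ → Type*) [∀ j, LinearOrder (C j)]

def blockInclusion {i k : ℕ} (h : i ≤ k) :
    (Σₗ j : Fin (i + 1), C j) ↪o Σₗ j : Fin (k + 1), C j :=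
  .sigmaLexMap (Fin.castLEOrderEmb (by omega)) fun j => (OrderIso.refl (C j)).toOrderEmbedding

def shift (n : ℕ) : NatSumOrder C ↪o NatSumOrder C :=
  .sigmaLexMap (.ofStrictMono (n + ·) (strictMono_id.const_add n))
    fun i => blockInclusion C (Nat.le_add_left i n)

theorem lt_shift (x y : NatSumOrder C) : x < shift C ((ofLex x).1 + 1) y :=
  Sigma.Lex.left _ _ (by show (ofLex x).1 < (ofLex x).1 + 1 + _; omega)

def embeddingIci (x : NatSumOrder C) : NatSumOrder C ↪o Set.Ici x :=
  RelEmbedding.codRestrict _ (shift C ((ofLex x).1 + 1)) fun y => (lt_shift C x y).le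

end NatSumOrder

/-- Let `L = Σ_{i∈ℕ} (Σ_{j≤i} C_j)`.  Then for every `x ∈ L`, `L` order-embeds into the
final segment `{y : x ≤ y}`; consequently `L` is bi-embeddable with each of its nonempty
final segments. -/
theorem natSumOrder_embeds_finalSegment (C : ℕ → Type*) [∀ j, LinearOrder (C j)] :
    (∀ x : NatSumOrder C, Nonempty (NatSumOrder C ↪o {y : NatSumOrder C // x ≤ y})) ∧
      ∀ S : Set (NatSumOrder C), S.Nonempty → (∀ ⦃a b : NatSumOrder C⦄, a ∈ S → a ≤ b → b ∈ S) →
        Nonempty (NatSumOrder C ↪o ↥S) ∧ Nonempty (↥S ↪o NatSumOrder C) := by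
  have embeds_ici (x : NatSumOrder C) : Nonempty (NatSumOrder C ↪o Set.Ici x) :=
    ⟨NatSumOrder.embeddingIci C x⟩
  refine ⟨embeds_ici, fun S hne hS => ⟨?_, ⟨OrderEmbedding.subtype _⟩⟩⟩
  exact IsUpperSet.nonempty_orderEmbedding embeds_ici (fun _ _ hab ha => hS ha hab) hne
end

section
/- Let L be a well-founded linear order with least element (i.e., L has no infinite strictly descending sequence) and let A be a nontrivial atomless Boolean algebra. Then there is no injective Boolean algebra homomorphism from A into the interval algebra Int(L). Equivalently, if a nontrivial atomless Boolean algebra embeds into Int(L), then L contains an infinite strictly descending sequence. -/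
/-- The collection of all finite unions of half-open intervals `[a,b)` and final
segments `[a,∞)` in a linear order `L`: the carrier of the interval algebra `Int(L)`,
viewed as a Boolean subalgebra of the powerset of `L`. -/
def IntAlgSets (L : Type*) [LinearOrder L] : Set (Set L) :=
  {S | ∃ I : Set (Set L), I.Finite ∧
    (∀ A ∈ I, (∃ a b : L, A = Set.Ico a b) ∨ ∃ a : L, A = Set.Ici a) ∧ S = ⋃₀ I}

/-!
Every nonempty `S ∈ Int(L)` has a point `x ∈ S` beyond which it is order-connected: take the
largest left endpoint of its nonempty pieces. Of two disjoint nonempty such sets, the one with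
the smaller such point therefore lies entirely below the point of the other. Hence, splitting a
nonzero element `b` of an atomless algebra into two disjoint nonzero parts, the image of one part
lies below some point of `f b`. If `x` is a strict upper bound of `f b`, that point is a smaller
strict upper bound of the image of a nonzero element, so such bounds have no least element,
contradicting well-foundedness of `L`.
-/

open Set

section

variable {L : Type*} [LinearOrder L]

namespace Set

def OrdConnectedFrom (S : Set L) (x : L) : Prop :=
  x ∈ S ∧ ∀ y ∈ S, x ≤ y → Icc x y ⊆ S

variable {S T : Set L} {x y : L}

theorem OrdConnected.ordConnectedFrom (hS : S.OrdConnected) (hx : x ∈ S) :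
    S.OrdConnectedFrom x :=
  ⟨hx, fun _ hy _ => hS.out hx hy⟩

theorem OrdConnectedFrom.union_of_le (hS : S.OrdConnectedFrom x) (hT : T.OrdConnectedFrom y)
    (hxy : x ≤ y) : (S ∪ T).OrdConnectedFrom y := by
  refine ⟨Or.inr hT.1, ?_⟩
  rintro z (hz | hz) hyz
  · exact (Icc_subset_Icc_left hxy).trans ((hS.2 z hz (hxy.trans hyz)).trans subset_union_left)
  · exact (hT.2 z hz hyz).trans subset_union_right

theorem exists_ordConnectedFrom_union (hS : S.Nonempty → ∃ x, S.OrdConnectedFrom x)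
    (hT : T.Nonempty → ∃ x, T.OrdConnectedFrom x) (hST : (S ∪ T).Nonempty) :
    ∃ x, (S ∪ T).OrdConnectedFrom x := by
  rcases S.eq_empty_or_nonempty with rfl | hSne
  · simpa using hT (by simpa using hST)
  rcases T.eq_empty_or_nonempty with rfl | hTne
  · simpa using hS hSne
  obtain ⟨x, hx⟩ := hS hSne
  obtain ⟨y, hy⟩ := hT hTne
  rcases le_total x y with hxy | hyx
  · exact ⟨y, hx.union_of_le hy hxy⟩
  · exact ⟨x, union_comm S T ▸ hy.union_of_le hx hyx⟩

theorem OrdConnectedFrom.subset_Iio_of_disjoint (hS : S.OrdConnectedFrom x)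
    (hT : T.OrdConnectedFrom y) (hyx : y ≤ x) (hST : Disjoint S T) : T ⊆ Iio x :=
  fun z hz => lt_of_not_ge fun hxz =>
    disjoint_left.1 hST hS.1 (hT.2 z hz (hyx.trans hxz) ⟨hyx, hxz⟩)

end Set

theorem exists_ordConnectedFrom_of_mem_intAlgSets {S : Set L} (hS : S ∈ IntAlgSets L)
    (hne : S.Nonempty) : ∃ x, S.OrdConnectedFrom x := by
  obtain ⟨I, hIf, hI, rfl⟩ := hS
  induction I, hIf using Set.Finite.induction_on with
  | empty => simp at hne
  | @insert X I _ _ ih =>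
    rw [sUnion_insert] at hne ⊢
    refine exists_ordConnectedFrom_union (fun hX => ?_)
      (ih fun Y hY => hI Y (mem_insert_of_mem X hY)) hne
    rcases hI X (mem_insert X I) with ⟨a, b, rfl⟩ | ⟨a, rfl⟩
    · exact ⟨a, ordConnected_Ico.ordConnectedFrom (left_mem_Ico.2 (nonempty_Ico.1 hX))⟩
    · exact ⟨a, ordConnected_Ici.ordConnectedFrom self_mem_Ici⟩

theorem exists_mem_subset_Iio_of_disjoint_of_mem_intAlgSets {S T : Set L}
    (hS : S ∈ IntAlgSets L) (hT : T ∈ IntAlgSets L) (hST : Disjoint S T)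
    (hSne : S.Nonempty) (hTne : T.Nonempty) :
    (∃ x ∈ S, T ⊆ Iio x) ∨ ∃ x ∈ T, S ⊆ Iio x := by
  obtain ⟨x, hx⟩ := exists_ordConnectedFrom_of_mem_intAlgSets hS hSne
  obtain ⟨y, hy⟩ := exists_ordConnectedFrom_of_mem_intAlgSets hT hTne
  rcases le_total y x with hyx | hxy
  · exact Or.inl ⟨x, hx.1, hx.subset_Iio_of_disjoint hy hyx hST⟩
  · exact Or.inr ⟨y, hy.1, hy.subset_Iio_of_disjoint hx hxy hST.symm⟩

theorem exists_ne_bot_image_subset_Iio_of_not_isAtom {A : Type*} [BooleanAlgebra A]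
    {f : BoundedLatticeHom A (Set L)} (hinj : Function.Injective f)
    (hmem : ∀ a, f a ∈ IntAlgSets L) {a : A} (ha : a ≠ ⊥) (hat : ¬ IsAtom a) :
    ∃ b ≠ ⊥, ∃ x ∈ f a, f b ⊆ Iio x := by
  have hne : ∀ {b : A}, b ≠ ⊥ → (f b).Nonempty := fun hb =>
    nonempty_iff_ne_empty.2 fun h => hb (hinj (h.trans (map_bot f).symm))
  obtain ⟨b, hba, hb⟩ : ∃ b < a, b ≠ ⊥ := by
    simpa [IsAtom, ha] using hat
  have hc : a \ b ≠ ⊥ := fun h => hba.not_ge (sdiff_eq_bot_iff.1 h)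
  have hunion : f b ∪ f (a \ b) = f a :=
    (map_sup f b (a \ b)).symm.trans (congrArg f (sup_sdiff_cancel_right hba.le))
  have hdisj : Disjoint (f b) (f (a \ b)) := disjoint_sdiff_self_right.map f
  rw [← hunion]
  rcases exists_mem_subset_Iio_of_disjoint_of_mem_intAlgSets (hmem b) (hmem (a \ b)) hdisj
    (hne hb) (hne hc) with ⟨x, hx, hsub⟩ | ⟨x, hx, hsub⟩
  · exact ⟨a \ b, hc, x, Or.inl hx, hsub⟩
  · exact ⟨b, hb, x, Or.inr hx, hsub⟩

end

theorem no_atomless_into_intervalAlgebra_general (L : Type*) [LinearOrder L]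
    (hwf : ¬ ∃ g : ℕ → L, StrictAnti g)
    (A : Type*) [BooleanAlgebra A] [Nontrivial A] (hatomless : ∀ a : A, ¬ IsAtom a) :
    ¬ ∃ f : BoundedLatticeHom A (Set L),
        Function.Injective f ∧ ∀ a : A, f a ∈ IntAlgSets L := by
  rintro ⟨f, hinj, hmem⟩
  have : WellFoundedLT L := ⟨wellFounded_iff_isEmpty_descending_chain.2
    ⟨fun ⟨g, hg⟩ => hwf ⟨g, strictAnti_nat_of_succ_lt hg⟩⟩⟩
  have step := fun {a : A} (ha : a ≠ ⊥) =>
    exists_ne_bot_image_subset_Iio_of_not_isAtom hinj hmem ha (hatomless a)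
  obtain ⟨b, hb, x, -, hbx⟩ := step (top_ne_bot : (⊤ : A) ≠ ⊥)
  obtain ⟨m, ⟨b, hb, hbm⟩, hmin⟩ :=
    wellFounded_lt.has_min {x : L | ∃ b : A, b ≠ ⊥ ∧ f b ⊆ Iio x} ⟨x, b, hb, hbx⟩
  obtain ⟨c, hc, y, hy, hcy⟩ := step hb
  exact hmin y ⟨c, hc, hcy⟩ (hbm hy)

/-- Let `L` be a linear order with least element having no infinite strictly descending
sequence, and let `A` be a nontrivial atomless Boolean algebra.  Then there is no injective
Boolean algebra homomorphism from `A` into the interval algebra `Int(L)` (i.e. no injective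
bounded lattice homomorphism from `A` into the powerset of `L` whose range consists of
elements of `Int(L)`). -/
theorem no_atomless_into_intervalAlgebra (L : Type*) [LinearOrder L] [OrderBot L]
    (hwf : ¬ ∃ g : ℕ → L, StrictAnti g)
    (A : Type*) [BooleanAlgebra A] [Nontrivial A] (hatomless : ∀ a : A, ¬ IsAtom a) :
    ¬ ∃ f : BoundedLatticeHom A (Set L),
        Function.Injective f ∧ ∀ a : A, f a ∈ IntAlgSets L :=
  no_atomless_into_intervalAlgebra_general L hwf A hatomless
end

section
/- For every ordinal β and every sequence (m_n)_{n∈ℕ} of positive natural numbers, the lexicographic sum Σ_{n∈ℕ} (ω^β · m_n), where each summand is the linear order of ordinals below ω^β · m_n, is order-isomorphic to the linear order of ordinals below ω^{β+1}. -/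
/-!
Put `S n = m 0 + ⋯ + m (n - 1)` and `a = ω ^ β`, so that `ω ^ (β + 1) = a * ω`. The map
`(n, x) ↦ a * S n + x` places the `n`-th summand on the block `[a * S n, a * S (n + 1))`, hence is
strictly monotone. It is onto `a * ω`: any `y < a * ω` is `a * k + y % a` with `k = y / a` finite,
and `k` lies in some block `[S n, S (n + 1))` because the `m n` are positive.
-/

open Ordinal Finset

theorem exists_le_lt_succ_of_strictMono {f : ℕ → ℕ} (hf : StrictMono f) {k : ℕ} (hk : f 0 ≤ k) :
    ∃ n, f n ≤ k ∧ k < f (n + 1) := by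
  classical
  have hex : ∃ n, k < f (n + 1) := ⟨k, k.lt_succ_self.trans_le (hf.id_le _)⟩
  refine ⟨Nat.find hex, ?_, Nat.find_spec hex⟩
  rcases h : Nat.find hex with _ | j
  · exact hk
  · exact not_lt.1 (Nat.find_min hex (h ▸ j.lt_succ_self))

theorem strictMono_sum_range {M : Type*} [AddCommMonoid M] [PartialOrder M]
    [IsOrderedCancelAddMonoid M] {m : ℕ → M} (hm : ∀ n, 0 < m n) :
    StrictMono fun n => ∑ i ∈ range n, m i :=
  strictMono_nat_of_lt_succ fun n => by
    simpa only [sum_range_succ] using lt_add_of_pos_right _ (hm n)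

namespace Ordinal

variable {a : Ordinal} {m : ℕ → ℕ}

theorem mul_add_lt_mul_add {b c x : Ordinal} (hx : x < a * c) : a * b + x < a * (b + c) := by
  rw [mul_add]
  exact add_lt_add_right hx _

noncomputable def lexSumMulEmbedding (a : Ordinal) (m : ℕ → ℕ)
    (p : Σₗ n, Set.Iio (a * (m n : Ordinal))) : Ordinal :=
  a * ↑(∑ i ∈ range (ofLex p).1, m i) + (ofLex p).2

theorem lexSumMulEmbedding_lt (p : Σₗ n, Set.Iio (a * (m n : Ordinal))) :
    lexSumMulEmbedding a m p < a * ↑(∑ i ∈ range ((ofLex p).1 + 1), m i) := by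
  rw [sum_range_succ, Nat.cast_add]
  exact mul_add_lt_mul_add (ofLex p).2.2

theorem strictMono_lexSumMulEmbedding : StrictMono (lexSumMulEmbedding a m) := by
  rintro ⟨n, x⟩ ⟨n', x'⟩ (⟨_, _, hn⟩ | ⟨_, _, hx⟩)
  · calc lexSumMulEmbedding a m (toLex ⟨n, x⟩)
        < a * ↑(∑ i ∈ range (n + 1), m i) := lexSumMulEmbedding_lt (toLex ⟨n, x⟩)
      _ ≤ a * ↑(∑ i ∈ range n', m i) := by
        gcongr
        exact hn
      _ ≤ a * ↑(∑ i ∈ range n', m i) + (x' : Ordinal) := le_self_add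
  · exact add_lt_add_right (Subtype.coe_lt_coe.2 hx) _

theorem range_lexSumMulEmbedding (hm : ∀ n, 0 < m n) :
    Set.range (lexSumMulEmbedding a m) = Set.Iio (a * ω) := by
  ext y
  constructor
  · rintro ⟨p, rfl⟩
    exact (lexSumMulEmbedding_lt p).trans_le (mul_le_mul_right (natCast_lt_omega0 _).le a)
  · intro hy
    have ha : a ≠ 0 := by rintro rfl; simp at hy
    obtain ⟨k, hk⟩ := lt_omega0.1 ((lt_mul_iff_div_lt ha).1 hy)
    obtain ⟨n, hnk, hkn⟩ :=
      exists_le_lt_succ_of_strictMono (strictMono_sum_range hm) (k := k) (by simp)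
    set s := ∑ i ∈ range n, m i
    have hx : a * ↑(k - s) + y % a < a * (m n : Ordinal) := by
      calc a * ↑(k - s) + y % a < a * (↑(k - s) + 1) :=
            mul_add_lt_mul_add (by simpa using mod_lt y ha)
        _ ≤ a * (m n : Ordinal) := by
          rw [sum_range_succ] at hkn
          gcongr
          exact_mod_cast (by omega : k - s + 1 ≤ m n)
    refine ⟨toLex ⟨n, _, hx⟩, ?_⟩
    change a * ↑s + (a * ↑(k - s) + y % a) = y
    rw [← add_assoc, ← mul_add, ← Nat.cast_add, Nat.add_sub_cancel' hnk, ← hk, div_add_mod]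

noncomputable def lexSumIioMulOrderIso (a : Ordinal) (hm : ∀ n, 0 < m n) :
    (Σₗ n, Set.Iio (a * (m n : Ordinal))) ≃o Set.Iio (a * ω) :=
  (strictMono_lexSumMulEmbedding.orderIso _).trans
    (OrderIso.setCongr _ _ (range_lexSumMulEmbedding hm))

end Ordinal

/-- For every ordinal `β` and every sequence `(m_n)` of positive natural numbers, the
lexicographic sum `Σ_{n∈ℕ} (ω^β · m_n)` of the linear orders of ordinals below
`ω^β · m_n` is order-isomorphic to the linear order of ordinals below `ω^(β+1)`. -/
theorem lexSum_omega_pow_mul_orderIso (β : Ordinal) (m : ℕ → ℕ) (hm : ∀ n, 0 < m n) :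
    Nonempty
      ((Lex ((n : ℕ) × ↥(Set.Iio (omega0 ^ β * (m n : Ordinal))))) ≃o
        ↥(Set.Iio (omega0 ^ (β + 1)))) := by
  rw [opow_add, opow_one]
  exact ⟨lexSumIioMulOrderIso _ hm⟩
end

section
/- Let β be an ordinal and k, ℓ positive natural numbers. If there is an injective Boolean algebra homomorphism from the interval algebra Int(ω^β · k) into the interval algebra Int(ω^β · ℓ), then k ≤ ℓ. -/
/-
Call a set of ordinals `c`-big if it contains an interval `[u, u + c)`. In the interval algebra
of an ordinal, `ω ^ γ`-bigness of an element is visible in the Boolean structure alone: an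
element is `1`-big iff it is nonzero, `ω ^ (γ + 1)`-big iff for every `n` it contains `n`
pairwise disjoint `ω ^ γ`-big elements (one of its finitely many intervals must then have length
`≥ ω ^ γ * n` for infinitely many `n`), and at a limit `γ` it is `ω ^ γ`-big iff it is
`ω ^ γ'`-big for all `γ' < γ`. Hence an injective homomorphism preserves `ω ^ γ`-bigness, by
induction on `γ`. The `k` blocks `[ω ^ β * i, ω ^ β * (i + 1))` of `ω ^ β * k` are pairwise
disjoint and `ω ^ β`-big, so their images provide `k` pairwise disjoint intervals of length
`ω ^ β` in `ω ^ β * ℓ`, and there is room for at most `ℓ` of those.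
-/

open Ordinal

/-- There is an injective Boolean algebra homomorphism from the interval algebra `Int(L)`
into the interval algebra `Int(M)`: a map on interval sets preserving union, intersection,
complement, `∅` and the full set, and injective on `Int(L)`. -/
def IntAlgEmbedding (L M : Type*) [LinearOrder L] [LinearOrder M] : Prop :=
  ∃ f : Set L → Set M,
    (∀ S ∈ IntAlgSets L, f S ∈ IntAlgSets M) ∧
    (∀ S ∈ IntAlgSets L, ∀ T ∈ IntAlgSets L, f (S ∪ T) = f S ∪ f T) ∧
    (∀ S ∈ IntAlgSets L, ∀ T ∈ IntAlgSets L, f (S ∩ T) = f S ∩ f T) ∧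
    (∀ S ∈ IntAlgSets L, f Sᶜ = (f S)ᶜ) ∧
    f ∅ = ∅ ∧ f Set.univ = Set.univ ∧
    ∀ S ∈ IntAlgSets L, ∀ T ∈ IntAlgSets L, f S = f T → S = T

open Set Function

section IntAlgSets

variable {L : Type*} [LinearOrder L]

theorem empty_mem_intAlgSets : (∅ : Set L) ∈ IntAlgSets L :=
  ⟨∅, finite_empty, by simp, by simp⟩

theorem Ico_mem_intAlgSets (a b : L) : Ico a b ∈ IntAlgSets L :=
  ⟨{Ico a b}, finite_singleton _, by simp, by simp⟩

theorem Ici_mem_intAlgSets (a : L) : Ici a ∈ IntAlgSets L :=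
  ⟨{Ici a}, finite_singleton _, by simp, by simp⟩

end IntAlgSets

namespace Ordinal

theorem lt_add_of_div_sub_eq {a b x y : Ordinal} (hb : b ≠ 0) (hx : a ≤ x) (hy : a ≤ y)
    (h : (x - a) / b = (y - a) / b) : y < x + b := by
  have hlt : y - a < x - a + b :=
    calc y - a < b * ((y - a) / b) + b := lt_mul_div_add _ hb
      _ ≤ x - a + b := by rw [← h]; gcongr; exact mul_div_le _ _
  calc y = a + (y - a) := (Ordinal.add_sub_cancel_of_le hy).symm
    _ < a + (x - a + b) := by gcongr
    _ = x + b := by rw [← add_assoc, Ordinal.add_sub_cancel_of_le hx]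

theorem card_le_of_pairwiseDisjoint_Ico {ι : Type*} {s : Finset ι} {u : ι → Ordinal}
    {a b : Ordinal} {n : ℕ} (hu : ∀ i ∈ s, u i ∈ Ico a (a + b * n))
    (hs : (s : Set ι).PairwiseDisjoint fun i => Ico (u i) (u i + b)) : s.card ≤ n := by
  rcases eq_or_ne b 0 with rfl | hb
  · have : s = ∅ := Finset.eq_empty_of_forall_notMem fun i hi => by simpa using hu i hi
    simp [this]
  have hmaps : ∀ i ∈ s, (u i - a) / b ∈ (Finset.range n).image (Nat.cast : ℕ → Ordinal) := by
    intro i hi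
    have hlt : (u i - a) / b < n := (lt_mul_iff_div_lt hb).1 <|
      lt_of_not_ge fun h => (hu i hi).2.not_ge ((le_sub_of_le (hu i hi).1).1 h)
    obtain ⟨m, hm⟩ := lt_omega0.1 (hlt.trans (natCast_lt_omega0 n))
    rw [hm, Nat.cast_lt] at hlt
    exact Finset.mem_image.2 ⟨m, Finset.mem_range.2 hlt, hm.symm⟩
  -- `(u i - a) / b` is the index of the block `[a + b * q, a + b * (q + 1))` containing `u i`
  have hinj : (s : Set ι).InjOn fun i => (u i - a) / b := by
    intro i hi j hj hq
    by_contra hij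
    have hself : ∀ x, x ∈ Ico x (x + b) := fun x =>
      left_mem_Ico.2 (lt_add_of_pos_right x (pos_iff_ne_zero.2 hb))
    rcases le_total (u i) (u j) with hle | hle
    · exact (hs hi hj hij).ne_of_mem
        ⟨hle, lt_add_of_div_sub_eq hb (hu i hi).1 (hu j hj).1 hq⟩ (hself _) rfl
    · exact (hs hi hj hij).ne_of_mem (hself _)
        ⟨hle, lt_add_of_div_sub_eq hb (hu j hj).1 (hu i hi).1 hq.symm⟩ rfl
  calc s.card ≤ ((Finset.range n).image (Nat.cast : ℕ → Ordinal)).card :=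
        Finset.card_le_card_of_injOn _ hmaps hinj
    _ ≤ n := Finset.card_image_le.trans (Finset.card_range n).le

def HasSegment (c : Ordinal) (T : Set Ordinal) : Prop := ∃ u, Ico u (u + c) ⊆ T

theorem HasSegment.of_le {c c' : Ordinal} {T : Set Ordinal} (h : HasSegment c T) (hc : c' ≤ c) :
    HasSegment c' T :=
  let ⟨u, hu⟩ := h
  ⟨u, (Ico_subset_Ico_right (by gcongr)).trans hu⟩

theorem hasSegment_one_of_nonempty {T : Set Ordinal} (hT : T.Nonempty) : HasSegment 1 T :=
  let ⟨x, hx⟩ := hT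
  ⟨x, fun _ hy => (le_antisymm (Order.lt_add_one_iff.1 hy.2) hy.1) ▸ hx⟩

theorem HasSegment.nonempty {c : Ordinal} {T : Set Ordinal} (h : HasSegment c T) (hc : 0 < c) :
    T.Nonempty :=
  let ⟨u, hu⟩ := h
  ⟨u, hu (left_mem_Ico.2 (lt_add_of_pos_right u hc))⟩

/-- Intervals are encoded by (start, length) pairs: `p` stands for `[p.1, p.1 + p.2)`. -/
def unionIco (J : Finset (Ordinal × Ordinal)) : Set Ordinal := ⋃ p ∈ J, Ico p.1 (p.1 + p.2)

theorem hasSegment_unionIco_of_le {J : Finset (Ordinal × Ordinal)} {p : Ordinal × Ordinal}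
    {c : Ordinal} (hp : p ∈ J) (hc : c ≤ p.2) : HasSegment c (unionIco J) :=
  ⟨p.1, (Ico_subset_Ico_right (by gcongr)).trans (subset_biUnion_of_mem (u := fun p =>
    Ico p.1 (p.1 + p.2)) hp)⟩

theorem card_le_sum_of_pairwiseDisjoint_Ico {ι : Type*} {J : Finset (Ordinal × Ordinal)}
    {b : Ordinal} {N : Ordinal × Ordinal → ℕ} (hN : ∀ p ∈ J, p.2 ≤ b * N p) {s : Finset ι}
    {u : ι → Ordinal} (hu : ∀ i ∈ s, u i ∈ unionIco J)
    (hs : (s : Set ι).PairwiseDisjoint fun i => Ico (u i) (u i + b)) :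
    s.card ≤ ∑ p ∈ J, N p := by
  classical
  have hcover : s ⊆ J.biUnion fun p => s.filter fun i => u i ∈ Ico p.1 (p.1 + p.2) := by
    intro i hi
    obtain ⟨p, hp, hip⟩ := mem_iUnion₂.1 (hu i hi)
    exact Finset.mem_biUnion.2 ⟨p, hp, Finset.mem_filter.2 ⟨hi, hip⟩⟩
  refine (Finset.card_le_card hcover).trans (Finset.card_biUnion_le.trans
    (Finset.sum_le_sum fun p hp =>
      card_le_of_pairwiseDisjoint_Ico (u := u) (a := p.1) (b := b) ?_ ?_))
  · intro i hi
    exact Ico_subset_Ico_right (by gcongr; exact hN p hp) (Finset.mem_filter.1 hi).2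
  · exact hs.subset (Finset.coe_subset.2 (Finset.filter_subset _ _))

theorem exists_mul_omega0_le_of_forall_pairwise_disjoint {J : Finset (Ordinal × Ordinal)}
    {b : Ordinal} (h : ∀ n : ℕ, ∃ u : Fin n → Ordinal, (∀ i, u i ∈ unionIco J) ∧
      Pairwise (Disjoint on fun i => Ico (u i) (u i + b))) :
    ∃ p ∈ J, b * ω ≤ p.2 := by
  by_contra! hJ
  have hN : ∀ p ∈ J, ∃ N : ℕ, p.2 ≤ b * N := by
    intro p hp
    obtain ⟨c, hc, hpc⟩ := (lt_mul_iff_of_isSuccLimit isSuccLimit_omega0).1 (hJ p hp)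
    obtain ⟨N, rfl⟩ := lt_omega0.1 hc
    exact ⟨N, hpc.le⟩
  choose! N hN using hN
  obtain ⟨u, hu, hdisj⟩ := h (∑ p ∈ J, N p + 1)
  have := card_le_sum_of_pairwiseDisjoint_Ico hN (s := Finset.univ) (fun i _ => hu i)
    (hdisj.set_pairwise _)
  simp at this

theorem exists_opow_le_of_hasSegment_unionIco {J : Finset (Ordinal × Ordinal)} {γ : Ordinal}
    (h : HasSegment (ω ^ γ) (unionIco J)) : ∃ p ∈ J, ω ^ γ ≤ p.2 := by
  classical
  obtain ⟨u, hu⟩ := h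
  set v := u + ω ^ γ
  have huv : u < v := lt_add_of_pos_right _ (opow_pos _ omega0_pos)
  -- `m` is the last right endpoint inside `[u, v)`: the interval containing `m` reaches `v`,
  -- and it starts early enough because `ω ^ γ` absorbs `m - u < ω ^ γ`.
  set m := u ⊔ (J.filter fun p => p.1 + p.2 < v).sup fun p => p.1 + p.2
  have hmv : m < v := max_lt huv <| (Finset.sup_lt_iff (bot_lt_of_lt huv)).2 fun p hp =>
    (Finset.mem_filter.1 hp).2
  have hum : u ≤ m := le_sup_left
  obtain ⟨p, hp, hpm⟩ := mem_iUnion₂.1 (hu ⟨hum, hmv⟩)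
  have hvp : v ≤ p.1 + p.2 := by
    by_contra! hpv
    exact hpm.2.not_ge (le_sup_of_le_right (Finset.le_sup (f := fun p => p.1 + p.2)
      (Finset.mem_filter.2 ⟨hp, hpv⟩)))
  have hmu : m + ω ^ γ = v := by
    rw [← Ordinal.add_sub_cancel_of_le hum, add_assoc,
      add_omega0_opow (sub_lt_of_lt_add hmv (opow_pos _ omega0_pos))]
  refine ⟨p, hp, (add_le_add_iff_left p.1).1 ?_⟩
  calc p.1 + ω ^ γ ≤ m + ω ^ γ := by gcongr; exact hpm.1
    _ ≤ p.1 + p.2 := hmu ▸ hvp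

theorem exists_opow_le_of_isSuccLimit {J : Finset (Ordinal × Ordinal)} {γ : Ordinal}
    (hγ : Order.IsSuccLimit γ) (h : ∀ γ' < γ, ∃ p ∈ J, ω ^ γ' ≤ p.2) :
    ∃ p ∈ J, ω ^ γ ≤ p.2 := by
  obtain ⟨q, hq, -⟩ := h 0 hγ.bot_lt
  obtain ⟨p, hp, hmax⟩ := J.exists_max_image Prod.snd ⟨q, hq⟩
  refine ⟨p, hp, (opow_le_of_isSuccLimit omega0_ne_zero hγ).2 fun γ' hγ' => ?_⟩
  obtain ⟨q, hq, hle⟩ := h γ' hγ'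
  exact hle.trans (hmax q hq)

theorem Ico_eq_Ico_add_sub (a b : Ordinal) : Ico a b = Ico a (a + (b - a)) := by
  rcases le_total a b with h | h
  · rw [Ordinal.add_sub_cancel_of_le h]
  · rw [Ordinal.sub_eq_zero_iff_le.2 h, add_zero, Ico_self, Ico_eq_empty_of_le h]

variable {δ : Ordinal}

theorem preimage_val_Ico_mem_intAlgSets (a b : Ordinal) :
    ((↑) : Iio δ → Ordinal) ⁻¹' Ico a b ∈ IntAlgSets (Iio δ) := by
  by_cases ha : a < δ
  · rcases lt_or_ge b δ with hb | hb
    · exact Ico_mem_intAlgSets (⟨a, ha⟩ : Iio δ) ⟨b, hb⟩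
    · convert Ici_mem_intAlgSets (⟨a, ha⟩ : Iio δ) using 1
      ext x
      simp [← Subtype.coe_le_coe, x.2.trans_le hb]
  · convert empty_mem_intAlgSets (L := Iio δ) using 1
    ext x
    simpa using fun h => (ha (h.trans_lt x.2)).elim

theorem exists_image_val_eq_unionIco {S : Set (Iio δ)} (hS : S ∈ IntAlgSets (Iio δ)) :
    ∃ J, (↑) '' S = unionIco J := by
  obtain ⟨I, hI, hIco, rfl⟩ := hS
  have : ∀ A ∈ I, ∃ p : Ordinal × Ordinal, ((↑) : Iio δ → Ordinal) '' A = Ico p.1 (p.1 + p.2) := by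
    intro A hA
    rcases hIco A hA with ⟨a, b, rfl⟩ | ⟨a, rfl⟩
    · refine ⟨(a, b - a), ?_⟩
      rw [← Ico_eq_Ico_add_sub, ← preimage_subtype_val_Ico, image_preimage_eq_of_subset]
      rw [Subtype.range_coe]
      exact fun x hx => hx.2.trans b.2
    · exact ⟨(a, δ - a), by rw [← Ico_eq_Ico_add_sub, image_subtype_val_Iio_Ici]⟩
  choose! g hg using this
  refine ⟨hI.toFinset.image g, ?_⟩
  rw [sUnion_eq_biUnion, image_iUnion₂, unionIco, Finset.set_biUnion_finset_image]
  simp only [Finite.mem_toFinset]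
  exact iUnion₂_congr hg

theorem exists_pairwise_disjoint_blocks {S : Set (Iio δ)} {u c : Ordinal} {n : ℕ}
    (h : Ico u (u + c * n) ⊆ (↑) '' S) :
    ∃ P : Fin n → Set (Iio δ), (∀ i, P i ∈ IntAlgSets (Iio δ)) ∧ (∀ i, P i ⊆ S) ∧
      Pairwise (Disjoint on P) ∧ ∀ i, HasSegment c ((↑) '' P i) := by
  set a : ℕ → Ordinal := fun i => u + c * i
  have ha : Monotone a := fun i j hij => by dsimp only [a]; gcongr
  have hblock : ∀ i : Fin n, Ico (a i) (a (i + 1)) ⊆ (↑) '' S := fun i =>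
    (Ico_subset_Ico le_self_add (ha (Nat.succ_le_of_lt i.2))).trans h
  refine ⟨fun i => (↑) ⁻¹' Ico (a i) (a (i + 1)), fun i => preimage_val_Ico_mem_intAlgSets _ _,
    fun i x hx => Subtype.val_injective.mem_set_image.1 (hblock i hx), ?_, fun i => ⟨a i, ?_⟩⟩
  · refine (ha.pairwise_disjoint_on_Ico_succ.comp_of_injective Fin.val_injective).mono
      fun i j hij => hij.preimage _
  · rw [image_preimage_eq_of_subset ((hblock i).trans (image_subset_range _ _))]
    simp only [a, Nat.cast_add, Nat.cast_one, mul_add_one, add_assoc, subset_refl]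

end Ordinal

structure IsIntAlgInfEmbedding {L M : Type*} [LinearOrder L] [LinearOrder M]
    (f : Set L → Set M) : Prop where
  mapsTo : ∀ S ∈ IntAlgSets L, f S ∈ IntAlgSets M
  map_inter : ∀ S ∈ IntAlgSets L, ∀ T ∈ IntAlgSets L, f (S ∩ T) = f S ∩ f T
  map_empty : f ∅ = ∅
  injOn : InjOn f (IntAlgSets L)

namespace IsIntAlgInfEmbedding

variable {L M : Type*} [LinearOrder L] [LinearOrder M] {f : Set L → Set M}
  {S T : Set L}

theorem mono (hf : IsIntAlgInfEmbedding f) (hS : S ∈ IntAlgSets L) (hT : T ∈ IntAlgSets L)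
    (hST : S ⊆ T) : f S ⊆ f T := by
  rw [← inter_eq_left.2 hST, hf.map_inter S hS T hT]
  exact inter_subset_right

theorem disjoint (hf : IsIntAlgInfEmbedding f) (hS : S ∈ IntAlgSets L) (hT : T ∈ IntAlgSets L)
    (hST : Disjoint S T) : Disjoint (f S) (f T) := by
  rw [disjoint_iff_inter_eq_empty, ← hf.map_inter S hS T hT, hST.inter_eq, hf.map_empty]

theorem nonempty (hf : IsIntAlgInfEmbedding f) (hS : S ∈ IntAlgSets L) (hne : S.Nonempty) :
    (f S).Nonempty := by
  rw [nonempty_iff_ne_empty, ← hf.map_empty]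
  exact fun h => hne.ne_empty (hf.injOn hS empty_mem_intAlgSets h)

end IsIntAlgInfEmbedding

def PreservesSegment {δ δ' : Ordinal} (f : Set (Iio δ) → Set (Iio δ')) (c : Ordinal) : Prop :=
  ∀ S ∈ IntAlgSets (Iio δ), HasSegment c ((↑) '' S) → HasSegment c ((↑) '' f S)

namespace IsIntAlgInfEmbedding

variable {δ δ' : Ordinal} {f : Set (Iio δ) → Set (Iio δ')}

theorem exists_pairwise_disjoint_segments {ι : Type*} {c : Ordinal} (hf : IsIntAlgInfEmbedding f)
    (hc : PreservesSegment f c) {P : ι → Set (Iio δ)} (hP : ∀ i, P i ∈ IntAlgSets (Iio δ))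
    (hdisj : Pairwise (Disjoint on P)) (hseg : ∀ i, HasSegment c ((↑) '' P i)) :
    ∃ v : ι → Ordinal, (∀ i, Ico (v i) (v i + c) ⊆ (↑) '' f (P i)) ∧
      Pairwise (Disjoint on fun i => Ico (v i) (v i + c)) := by
  choose v hv using fun i => hc (P i) (hP i) (hseg i)
  refine ⟨v, hv, fun i j hij => ?_⟩
  have := hf.disjoint (hP i) (hP j) (hdisj hij)
  exact ((disjoint_image_iff Subtype.val_injective).2 this).mono (hv i) (hv j)

theorem preservesSegment_one (hf : IsIntAlgInfEmbedding f) : PreservesSegment f 1 :=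
  fun _ hS h => hasSegment_one_of_nonempty <|
    (hf.nonempty hS ((h.nonempty one_pos).of_image)).image _

theorem preservesSegment_mul_omega0 {c : Ordinal} (hf : IsIntAlgInfEmbedding f) (hc : 0 < c)
    (h : PreservesSegment f c) : PreservesSegment f (c * ω) := by
  intro S hS ⟨u, hu⟩
  obtain ⟨J, hJ⟩ := exists_image_val_eq_unionIco (hf.mapsTo S hS)
  rw [hJ]
  suffices ∃ p ∈ J, c * ω ≤ p.2 from
    let ⟨p, hp, hcp⟩ := this; hasSegment_unionIco_of_le hp hcp
  refine exists_mul_omega0_le_of_forall_pairwise_disjoint fun n => ?_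
  obtain ⟨P, hP, hPS, hdisj, hseg⟩ := exists_pairwise_disjoint_blocks (n := n)
    ((Ico_subset_Ico_right (by gcongr; exact (natCast_lt_omega0 n).le)).trans hu)
  obtain ⟨v, hv, hvdisj⟩ := hf.exists_pairwise_disjoint_segments h hP hdisj hseg
  refine ⟨v, fun i => ?_, hvdisj⟩
  rw [← hJ]
  exact image_mono (hf.mono (hP i) hS (hPS i)) (hv i (left_mem_Ico.2 (lt_add_of_pos_right _ hc)))

theorem preservesSegment_opow_of_isSuccLimit {γ : Ordinal} (hf : IsIntAlgInfEmbedding f)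
    (hγ : Order.IsSuccLimit γ) (h : ∀ γ' < γ, PreservesSegment f (ω ^ γ')) :
    PreservesSegment f (ω ^ γ) := by
  intro S hS hSeg
  obtain ⟨J, hJ⟩ := exists_image_val_eq_unionIco (hf.mapsTo S hS)
  have hsmaller : ∀ γ' < γ, HasSegment (ω ^ γ') (unionIco J) := fun γ' hγ' =>
    hJ ▸ h γ' hγ' S hS (hSeg.of_le (opow_le_opow_right omega0_pos hγ'.le))
  obtain ⟨p, hp, hle⟩ := exists_opow_le_of_isSuccLimit hγ fun γ' hγ' =>
    exists_opow_le_of_hasSegment_unionIco (hsmaller γ' hγ')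
  rw [hJ]
  exact hasSegment_unionIco_of_le hp hle

theorem preservesSegment_opow (hf : IsIntAlgInfEmbedding f) (γ : Ordinal) :
    PreservesSegment f (ω ^ γ) := by
  induction γ using Ordinal.limitRecOn with
  | zero => simpa using hf.preservesSegment_one
  | add_one γ ih =>
    simpa [opow_succ] using hf.preservesSegment_mul_omega0 (opow_pos _ omega0_pos) ih
  | limit γ hγ ih => exact hf.preservesSegment_opow_of_isSuccLimit hγ ih

end IsIntAlgInfEmbedding

theorem intAlg_embedding_le_general (β : Ordinal) (k l : ℕ)
    (h : IntAlgEmbedding ↥(Set.Iio (omega0 ^ β * (k : Ordinal)))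
      ↥(Set.Iio (omega0 ^ β * (l : Ordinal)))) :
    k ≤ l := by
  obtain ⟨f, hmem, -, hinter, -, hempty, -, hinj⟩ := h
  have hf : IsIntAlgInfEmbedding f := ⟨hmem, hinter, hempty, fun S hS T hT => hinj S hS T hT⟩
  obtain ⟨P, hP, -, hdisj, hseg⟩ :=
    exists_pairwise_disjoint_blocks (S := (univ : Set (Iio (ω ^ β * k)))) (u := 0)
      (c := ω ^ β) (n := k)
      (by rw [zero_add, image_univ, Subtype.range_coe]; exact Ico_subset_Iio_self)
  obtain ⟨v, hv, hvdisj⟩ :=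
    hf.exists_pairwise_disjoint_segments (hf.preservesSegment_opow β) hP hdisj hseg
  have hvl : ∀ i, v i ∈ Ico 0 (0 + ω ^ β * l) := fun i => by
    obtain ⟨x, -, hx⟩ := hv i (left_mem_Ico.2 (lt_add_of_pos_right _ (opow_pos _ omega0_pos)))
    exact ⟨zero_le, by rw [zero_add, ← hx]; exact x.2⟩
  simpa using card_le_of_pairwiseDisjoint_Ico (s := Finset.univ) (fun i _ => hvl i)
    (hvdisj.set_pairwise _)

/-- If there is an injective Boolean algebra homomorphism from `Int(ω^β · k)` into
`Int(ω^β · ℓ)`, with `k, ℓ` positive, then `k ≤ ℓ`. -/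
theorem intAlg_embedding_le (β : Ordinal) (k l : ℕ) (hk : 0 < k) (hl : 0 < l)
    (h : IntAlgEmbedding ↥(Set.Iio (omega0 ^ β * (k : Ordinal)))
      ↥(Set.Iio (omega0 ^ β * (l : Ordinal)))) :
    k ≤ l :=
  intAlg_embedding_le_general β k l h
end

section
/- For every nonzero ordinal α, the interval algebra Int(α) of the linear order of ordinals below α is superatomic. -/
/-!
Let `S ≠ ∅` lie in a Boolean algebra `T` of finite unions of intervals of a well order `L`. Take
`γ ∈ WithTop L` least such that some nonempty `B₀ ⊆ S` in `T` lies below `γ`. By minimality every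
nonempty `B ⊆ B₀` in `T` is cofinal in `D = {x | x < γ}`. One of the finitely many intervals making
up `B` is then cofinal in `D`, and an order-connected set that is cofinal in `D` contains a final
segment of `D`. Two final segments of `D` meet, so `B` and `B₀ \ B` cannot both be nonempty: `B₀` is
an atom of `T`.
-/

open Ordinal

open Filter

theorem Set.OrdConnected.eventually_atTop_of_frequently {M : Type*} [Preorder M] {s : Set M}
    (hs : s.OrdConnected) (h : ∃ᶠ x in atTop, x ∈ s) : ∀ᶠ x in atTop, x ∈ s := by
  obtain ⟨x, hx⟩ := h.exists
  refine mem_of_superset (Ici_mem_atTop x) fun y hxy => ?_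
  obtain ⟨z, hyz, hz⟩ := h.forall_exists_of_atTop y
  exact hs.out hx hz ⟨hxy, hyz⟩

theorem eventually_atTop_of_frequently_of_mem_intAlgSets {L M : Type*} [LinearOrder L]
    [Preorder M] {f : M → L} (hf : Monotone f) {S : Set L} (hS : S ∈ IntAlgSets L)
    (h : ∃ᶠ x in atTop, f x ∈ S) : ∀ᶠ x in atTop, f x ∈ S := by
  obtain ⟨I, hI, hIint, rfl⟩ := hS
  simp only [Set.mem_sUnion] at h
  obtain ⟨A, hAI, hA⟩ := hI.frequently_exists.1 h
  have hconn : A.OrdConnected := by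
    rcases hIint A hAI with ⟨a, b, rfl⟩ | ⟨a, rfl⟩ <;> infer_instance
  exact ((hconn.preimage_mono hf).eventually_atTop_of_frequently hA).mono
    fun x hx => Set.mem_sUnion_of_mem hx hAI

theorem eq_empty_or_eq_of_eventually_mem {α : Type*} {T : Set (Set α)}
    (hinter : ∀ S ∈ T, ∀ S' ∈ T, S ∩ S' ∈ T) (hcompl : ∀ S ∈ T, Sᶜ ∈ T)
    {F : Filter α} [F.NeBot] {A : Set α} (hA : A ∈ T)
    (hev : ∀ B ∈ T, B ⊆ A → B.Nonempty → ∀ᶠ x in F, x ∈ B) :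
    ∀ B ∈ T, B ⊆ A → B = ∅ ∨ B = A := by
  intro B hB hBA
  refine B.eq_empty_or_nonempty.imp_right fun hBne =>
    hBA.antisymm fun x hxA => by_contra fun hxB => ?_
  have hdiff := hev (A ∩ Bᶜ) (hinter A hA _ (hcompl B hB)) Set.inter_subset_left ⟨x, hxA, hxB⟩
  obtain ⟨y, hyB, -, hyB'⟩ := ((hev B hB hBA hBne).and hdiff).exists
  exact hyB' hyB

theorem exists_atom_of_subset_intAlgSets {L : Type*} [LinearOrder L] [WellFoundedLT L]
    {T : Set (Set L)} (hsub : T ⊆ IntAlgSets L)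
    (hinter : ∀ S ∈ T, ∀ S' ∈ T, S ∩ S' ∈ T) (hcompl : ∀ S ∈ T, Sᶜ ∈ T)
    {S : Set L} (hS : S ∈ T) (hSne : S.Nonempty) :
    ∃ A ∈ T, A ⊆ S ∧ A.Nonempty ∧ ∀ B ∈ T, B ⊆ A → B = ∅ ∨ B = A := by
  obtain ⟨γ, hγmin⟩ := exists_minimal_of_wellFoundedLT
    (fun γ : WithTop L => ∃ B ∈ T, B ⊆ S ∧ B.Nonempty ∧ ∀ x ∈ B, (x : WithTop L) < γ)
    ⟨⊤, S, hS, subset_rfl, hSne, fun x _ => WithTop.coe_lt_top x⟩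
  obtain ⟨B₀, hB₀T, hB₀S, hB₀ne, hB₀γ⟩ := hγmin.prop
  let D := {x : L | (x : WithTop L) < γ}
  have : Nonempty D := ⟨⟨_, hB₀γ _ hB₀ne.some_mem⟩⟩
  have hcofinal : ∀ B ∈ T, B ⊆ B₀ → B.Nonempty → ∃ᶠ x : D in atTop, (x : L) ∈ B := by
    intro B hBT hBB₀ hBne
    refine frequently_atTop.2 fun d => by_contra fun hd => ?_
    push Not at hd
    have hbelow : ∀ x ∈ B, (x : WithTop L) < (d : L) := fun x hx =>
      WithTop.coe_lt_coe.2 <| lt_of_not_ge fun hdx => hd ⟨x, hB₀γ x (hBB₀ hx)⟩ hdx hx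
    exact hγmin.not_lt ⟨B, hBT, hBB₀.trans hB₀S, hBne, hbelow⟩ d.2
  refine ⟨B₀, hB₀T, hB₀S, hB₀ne, eq_empty_or_eq_of_eventually_mem hinter hcompl
    (F := map ((↑) : D → L) atTop) hB₀T fun B hBT hBB₀ hBne => ?_⟩
  exact eventually_atTop_of_frequently_of_mem_intAlgSets (Subtype.mono_coe _) (hsub hBT)
    (hcofinal B hBT hBB₀ hBne)

theorem intervalAlgebra_superatomic_general (α : Ordinal)
    (T : Set (Set ↥(Set.Iio α)))
    (hsub : T ⊆ IntAlgSets ↥(Set.Iio α))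
    (hinter : ∀ S ∈ T, ∀ S' ∈ T, S ∩ S' ∈ T)
    (hcompl : ∀ S ∈ T, Sᶜ ∈ T) :
    ∀ S ∈ T, S ≠ ∅ →
      ∃ A ∈ T, A ⊆ S ∧ A ≠ ∅ ∧ ∀ B ∈ T, B ⊆ A → B = ∅ ∨ B = A := by
  intro S hS hSne
  obtain ⟨A, hAT, hAS, hAne, hatom⟩ :=
    exists_atom_of_subset_intAlgSets hsub hinter hcompl hS (Set.nonempty_iff_ne_empty.2 hSne)
  exact ⟨A, hAT, hAS, hAne.ne_empty, hatom⟩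

/-- For every nonzero ordinal `α`, the interval algebra `Int(α)` of the linear order of
ordinals below `α` is superatomic: every Boolean subalgebra `T` of `Int(α)` is atomic,
i.e. every nonempty member of `T` contains an atom of `T`. -/
theorem intervalAlgebra_superatomic (α : Ordinal) (hα : α ≠ 0)
    (T : Set (Set ↥(Set.Iio α)))
    (hsub : T ⊆ IntAlgSets ↥(Set.Iio α))
    (hbot : ∅ ∈ T) (htop : Set.univ ∈ T)
    (hunion : ∀ S ∈ T, ∀ S' ∈ T, S ∪ S' ∈ T)
    (hinter : ∀ S ∈ T, ∀ S' ∈ T, S ∩ S' ∈ T)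
    (hcompl : ∀ S ∈ T, Sᶜ ∈ T) :
    ∀ S ∈ T, S ≠ ∅ →
      ∃ A ∈ T, A ⊆ S ∧ A ≠ ∅ ∧ ∀ B ∈ T, B ⊆ A → B = ∅ ∨ B = A :=
  intervalAlgebra_superatomic_general α T hsub hinter hcompl
end
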